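/- Under the reality and Hamiltonian conditions on coefficients, the Lie bracket of the paired homogeneous operators satisfies [B_{(k-1,r-k)}, B_{(r-k,k-1)}] = (r(r+1)(2k−r−1)/(r−k+1)²) · |p_{k-1,r-k}|² · (xy)^{r-1}(x∂_x − y∂_y), for k = 1,...,r. -/

import Mathlib

/-!
On monomials, `x∂_x` and `y∂_y` act as multiplication by the exponents of `x` and `y`. Hence the
bracket of two homogeneous operators `x^{n₁}y^{n₂}(p x∂_x + q y∂_y)` is again of this form, with
explicit coefficients. When the coefficients of the pair are related by the reality condition, the
`y∂_y`-coefficient of the bracket is minus the conjugate of the `x∂_x`-coefficient; the Hamiltonian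
condition makes `ab` real, so that coefficient is a real multiple of `|a|²`.
-/

open MvPolynomial

/-- Planar polynomial vector fields: a pair `(A₁, A₂)` represents `A₁ ∂_x + A₂ ∂_y`. -/
abbrev PlanarVF := MvPolynomial (Fin 2) ℂ × MvPolynomial (Fin 2) ℂ

/-- The Lie bracket `[A,B] = A∘B − B∘A` of derivations, in components. -/
noncomputable def lieVF (A B : PlanarVF) : PlanarVF :=
  (A.1 * pderiv 0 B.1 + A.2 * pderiv 1 B.1 - B.1 * pderiv 0 A.1 - B.2 * pderiv 1 A.1,
   A.1 * pderiv 0 B.2 + A.2 * pderiv 1 B.2 - B.1 * pderiv 0 A.2 - B.2 * pderiv 1 A.2)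

/-- The homogeneous differential operator `B_n = x^{n¹} y^{n²} (p x∂_x + q y∂_y)`. -/
noncomputable def Bop (n1 n2 : ℕ) (p q : ℂ) : PlanarVF :=
  (C p * X 0 ^ (n1 + 1) * X 1 ^ n2, C q * X 0 ^ n1 * X 1 ^ (n2 + 1))

namespace MvPolynomial

variable {R : Type*} [CommSemiring R]

theorem X_pow_mul_X_pow_eq_monomial (a b : ℕ) :
    (X 0 ^ a * X 1 ^ b : MvPolynomial (Fin 2) R) =
      monomial (Finsupp.single 0 a + Finsupp.single 1 b) 1 := by
  rw [X_pow_eq_monomial, X_pow_eq_monomial, monomial_mul, one_mul]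

theorem X_zero_mul_pderiv_X_pow_mul_X_pow (a b : ℕ) :
    (X 0 * pderiv 0 (X 0 ^ a * X 1 ^ b) : MvPolynomial (Fin 2) R) =
      (a : MvPolynomial (Fin 2) R) * (X 0 ^ a * X 1 ^ b) := by
  rw [X_pow_mul_X_pow_eq_monomial, X_mul_pderiv_monomial, nsmul_eq_mul]
  simp

theorem X_one_mul_pderiv_X_pow_mul_X_pow (a b : ℕ) :
    (X 1 * pderiv 1 (X 0 ^ a * X 1 ^ b) : MvPolynomial (Fin 2) R) =
      (b : MvPolynomial (Fin 2) R) * (X 0 ^ a * X 1 ^ b) := by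
  rw [X_pow_mul_X_pow_eq_monomial, X_mul_pderiv_monomial, nsmul_eq_mul]
  simp

end MvPolynomial

theorem lieVF_Bop (n1 n2 m1 m2 : ℕ) (p q p' q' : ℂ) :
    lieVF (Bop n1 n2 p q) (Bop m1 m2 p' q') =
      Bop (n1 + m1) (n2 + m2) ((p * m1 + q * m2) * p' - (p' * n1 + q' * n2) * p)
        ((p * m1 + q * m2) * q' - (p' * n1 + q' * n2) * q) := by
  have h00 := X_zero_mul_pderiv_X_pow_mul_X_pow (R := ℂ)
  have h11 := X_one_mul_pderiv_X_pow_mul_X_pow (R := ℂ)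
  simp only [lieVF, Bop, mul_assoc, pderiv_C_mul]
  simp only [map_sub, map_add, map_mul, map_natCast]
  refine Prod.ext ?_ ?_
  · linear_combination (norm := (push_cast; ring))
      (C p' * X 0 ^ n1 * X 1 ^ n2) * (C p * h00 (m1 + 1) m2 + C q * h11 (m1 + 1) m2) -
        (C p * X 0 ^ m1 * X 1 ^ m2) * (C p' * h00 (n1 + 1) n2 + C q' * h11 (n1 + 1) n2)
  · linear_combination (norm := (push_cast; ring))
      (C q' * X 0 ^ n1 * X 1 ^ n2) * (C p * h00 m1 (m2 + 1) + C q * h11 m1 (m2 + 1)) -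
        (C q * X 0 ^ m1 * X 1 ^ m2) * (C p' * h00 n1 (n2 + 1) + C q' * h11 n1 (n2 + 1))

open ComplexConjugate

noncomputable def pairedCoeff (n1 n2 : ℕ) (p q : ℂ) : ℂ :=
  p * q * ((n2 : ℂ) - n1) + Complex.normSq q * n1 - Complex.normSq p * n2

theorem lieVF_Bop_paired (n1 n2 : ℕ) (p q : ℂ) :
    lieVF (Bop n1 n2 p (conj q)) (Bop n2 n1 q (conj p)) =
      Bop (n1 + n2) (n1 + n2) (pairedCoeff n1 n2 p q) (-conj (pairedCoeff n1 n2 p q)) := by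
  rw [lieVF_Bop, add_comm n2 n1, pairedCoeff]
  congr 1 <;> simp only [map_add, map_sub, map_mul, map_natCast, Complex.conj_conj,
    ← Complex.mul_conj] <;> ring

theorem pairedCoeff_of_hamiltonian {r k : ℕ} (hk1 : 1 ≤ k) (hkr : k ≤ r) {a b : ℂ}
    (hham : a = -(((r : ℂ) - k + 1) / k) * conj b) :
    pairedCoeff (k - 1) (r - k) a b =
      (r : ℂ) * ((r : ℂ) + 1) * (2 * (k : ℂ) - r - 1) / ((r : ℂ) - k + 1) ^ 2 *
        (Complex.normSq a : ℂ) := by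
  have hk : (k : ℂ) ≠ 0 := by exact_mod_cast (by omega : k ≠ 0)
  have hrk : (r : ℂ) - k + 1 ≠ 0 := by
    rw [← Nat.cast_sub hkr]; exact_mod_cast Nat.succ_ne_zero (r - k)
  rw [pairedCoeff, Nat.cast_sub hk1, Nat.cast_sub hkr, ← Complex.mul_conj, ← Complex.mul_conj,
    hham]
  simp only [map_mul, map_neg, map_div₀, map_add, map_sub, map_one, map_natCast, Complex.conj_conj]
  field_simp
  ring

/-- Under the reality condition (`q_{k-1,r-k} = conj(p_{r-k,k-1})`) and the Hamiltonian
condition `p_{k-1,r-k} = −((r−k+1)/k)·conj(p_{r-k,k-1})`, the Lie bracket of the paired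
homogeneous operators satisfies
`[B_{(k-1,r-k)}, B_{(r-k,k-1)}]
   = (r(r+1)(2k−r−1)/(r−k+1)²)·|p_{k-1,r-k}|²·(xy)^{r-1}(x∂_x − y∂_y)`.
Here `a = p_{k-1,r-k}` and `b = p_{r-k,k-1}`. -/
theorem lie_bracket_paired_ops (r k : ℕ) (hk1 : 1 ≤ k) (hkr : k ≤ r)
    (a b : ℂ) (hham : a = -(((r : ℂ) - k + 1) / k) * starRingEnd ℂ b) :
    lieVF (Bop (k - 1) (r - k) a (starRingEnd ℂ b))
        (Bop (r - k) (k - 1) b (starRingEnd ℂ a)) =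
      (C ((r : ℂ) * ((r : ℂ) + 1) * (2 * (k : ℂ) - r - 1) / ((r : ℂ) - k + 1) ^ 2 *
            (Complex.normSq a : ℂ)) * X 0 ^ r * X 1 ^ (r - 1),
       -(C ((r : ℂ) * ((r : ℂ) + 1) * (2 * (k : ℂ) - r - 1) / ((r : ℂ) - k + 1) ^ 2 *
            (Complex.normSq a : ℂ))) * X 0 ^ (r - 1) * X 1 ^ r) := by
  have hdeg : k - 1 + (r - k) = r - 1 := by omega
  have hdeg' : r - 1 + 1 = r := by omega
  rw [lieVF_Bop_paired, pairedCoeff_of_hamiltonian hk1 hkr hham, hdeg, Bop, hdeg']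
  simp [map_ofNat]
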